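/- arXiv:2306.01459 — 3 statements merged into one kernel-verified Lean document; each statement's English description precedes it below -/
import Mathlib

section
/- Let N, M ≥ 3. Suppose z̄, τ̄₁,…,τ̄_{M-1}, τ̄'₁,…,τ̄'_{N-1} are reals with an M-circle inequality 0 ≤ M-2 - z̄ + Σ_{j=1}^{M-1} (-1)^{b_j} τ̄_j (Σ b_j ≡ M mod 2) and an N-circle inequality 0 ≤ N-2 + z̄ + Σ_{k=1}^{N-1} (-1)^{a_k} τ̄'_k (Σ a_k ≡ N+1 mod 2). Then their sum is an (N+M-2)-circle inequality: 0 ≤ (N+M-2) - 2 + Σ_k (-1)^{a_k} τ̄'_k + Σ_j (-1)^{b_j} τ̄_j, with total sign parity Σ a_k + Σ b_j ≡ (N+M-2)+1 (mod 2). -/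
theorem stmt5_general (N M : ℕ) (hN : 3 ≤ N)
    (z : ℝ) (τ τ' : ℕ → ℝ) (a b : ℕ → ℕ)
    (ha : (∑ k ∈ Finset.range (N-1), a k) % 2 = (N+1) % 2)
    (hb : (∑ j ∈ Finset.range (M-1), b j) % 2 = M % 2)
    (hM' : 0 ≤ (M:ℝ) - 2 - z + ∑ j ∈ Finset.range (M-1), (-1:ℝ)^(b j) * τ j)
    (hN' : 0 ≤ (N:ℝ) - 2 + z + ∑ k ∈ Finset.range (N-1), (-1:ℝ)^(a k) * τ' k) :
    (0 ≤ ((N:ℝ) + M - 2) - 2 +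
        (∑ k ∈ Finset.range (N-1), (-1:ℝ)^(a k) * τ' k) +
        (∑ j ∈ Finset.range (M-1), (-1:ℝ)^(b j) * τ j)) ∧
    ((∑ k ∈ Finset.range (N-1), a k) + (∑ j ∈ Finset.range (M-1), b j)) % 2
        = ((N + M - 2) + 1) % 2 :=
  ⟨by linarith, by omega⟩

theorem stmt5 (N M : ℕ) (hN : 3 ≤ N) (hM : 3 ≤ M)
    (z : ℝ) (τ τ' : ℕ → ℝ) (a b : ℕ → ℕ)
    (ha : (∑ k ∈ Finset.range (N-1), a k) % 2 = (N+1) % 2)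
    (hb : (∑ j ∈ Finset.range (M-1), b j) % 2 = M % 2)
    (hM' : 0 ≤ (M:ℝ) - 2 - z + ∑ j ∈ Finset.range (M-1), (-1:ℝ)^(b j) * τ j)
    (hN' : 0 ≤ (N:ℝ) - 2 + z + ∑ k ∈ Finset.range (N-1), (-1:ℝ)^(a k) * τ' k) :
    (0 ≤ ((N:ℝ) + M - 2) - 2 +
        (∑ k ∈ Finset.range (N-1), (-1:ℝ)^(a k) * τ' k) +
        (∑ j ∈ Finset.range (M-1), (-1:ℝ)^(b j) * τ j)) ∧
    ((∑ k ∈ Finset.range (N-1), a k) + (∑ j ∈ Finset.range (M-1), b j)) % 2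
        = ((N + M - 2) + 1) % 2 :=
  stmt5_general N M hN z τ τ' a b ha hb hM' hN'
end

section
/- Let P = {(a₁,…,aₙ,b) ∈ [0,1]^{n+1} : (1-aᵢ)/2 ≤ b ≤ (1+aᵢ)/2 for all i}. The set of extreme points of P is exactly {(1,…,1,0), (1,…,1,1)} ∪ {(a₁,…,aₙ,1/2) : aᵢ ∈ {0,1} for all i, and aⱼ = 0 for at least one j}. In particular P has exactly 2ⁿ + 1 vertices. -/
/-!
Rewriting the constraints as `|1 - 2b| ≤ aᵢ ≤ 1` shows that `P` is the convex hull of the middle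
cube `[0,1]ⁿ × {1/2}` and the two apexes `(1,0)`, `(1,1)`. A point with `b ∉ {0, 1/2, 1}` lies
strictly between an apex and a point of the middle cube, and a point with `b ∈ {0, 1}` is an apex.
On the middle slice only cube vertices can be extreme, and `(1, 1/2)` is the midpoint of the
apexes. Conversely, the listed points are extreme coordinatewise: `0` and `1` are extreme in
`[0,1]`, and `aⱼ = 0` forces `b = 1/2`, while `b ∈ {0,1}` forces `a = 1`.
-/

open Set

theorem Set.eq_of_mem_extremePoints_of_mem_openSegment {𝕜 E : Type*} [Ring 𝕜] [PartialOrder 𝕜]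
    [AddCommGroup E] [Module 𝕜 E] {A : Set E} {x y z : E} (hx : x ∈ A.extremePoints 𝕜)
    (hy : y ∈ A) (hz : z ∈ A) (h : x ∈ openSegment 𝕜 y z) : y = z :=
  have hyz := (mem_extremePoints.1 hx).2 y hy z hz h
  hyz.1.trans hyz.2.symm

theorem AffineMap.eq_of_mem_openSegment_of_map_mem_extremePoints {𝕜 E F : Type*} [Ring 𝕜]
    [PartialOrder 𝕜] [AddRightMono 𝕜] [AddCommGroup E] [Module 𝕜 E] [AddCommGroup F] [Module 𝕜 F]
    (f : E →ᵃ[𝕜] F) {A : Set F} {x y z : E} (hx : f x ∈ A.extremePoints 𝕜) (hy : f y ∈ A)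
    (hz : f z ∈ A) (h : x ∈ openSegment 𝕜 y z) : f y = f x ∧ f z = f x :=
  (mem_extremePoints.1 hx).2 _ hy _ hz (image_openSegment 𝕜 f y z ▸ mem_image_of_mem f h)

def wedgeConePolytope (n : ℕ) : Set ((Fin n → ℝ) × ℝ) :=
  {x | (∀ i, x.1 i ∈ Icc (0:ℝ) 1) ∧ x.2 ∈ Icc (0:ℝ) 1 ∧
    ∀ i, (1 - x.1 i) / 2 ≤ x.2 ∧ x.2 ≤ (1 + x.1 i) / 2}

def wedgeConeVertices (n : ℕ) : Set ((Fin n → ℝ) × ℝ) :=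
  {(fun _ => 1, 0), (fun _ => 1, 1)} ∪
    {x | (∀ i, x.1 i = 0 ∨ x.1 i = 1) ∧ (∃ j, x.1 j = 0) ∧ x.2 = 1/2}

namespace wedgeConePolytope

variable {n : ℕ}

theorem mk_half_mem_iff {a : Fin n → ℝ} :
    (a, 1/2) ∈ wedgeConePolytope n ↔ ∀ i, a i ∈ Icc 0 1 := by
  refine ⟨fun h => h.1, fun h => ⟨h, by norm_num, fun i => ?_⟩⟩
  constructor <;> linarith [(h i).1, (h i).2]

theorem apex_mem {t : ℝ} (ht : t ∈ Icc 0 1) :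
    ((fun _ => 1, t) : (Fin n → ℝ) × ℝ) ∈ wedgeConePolytope n :=
  ⟨fun _ => ⟨zero_le_one, le_rfl⟩, ht, fun _ => by constructor <;> linarith [ht.1, ht.2]⟩

theorem fst_eq_one_of_snd_eq_zero_or_one {x : (Fin n → ℝ) × ℝ} (hx : x ∈ wedgeConePolytope n)
    (hb : x.2 = 0 ∨ x.2 = 1) : x.1 = fun _ => 1 := by
  funext i
  obtain ⟨hlo, hhi⟩ := hx.2.2 i
  have := (hx.1 i).2
  rcases hb with hb | hb <;> rw [hb] at hlo hhi <;> linarith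

theorem snd_eq_half_of_fst_eq_zero {x : (Fin n → ℝ) × ℝ} (hx : x ∈ wedgeConePolytope n)
    {j : Fin n} (hj : x.1 j = 0) : x.2 = 1/2 := by
  have := hx.2.2 j
  rw [hj] at this
  linarith [this.1, this.2]

theorem snd_eq_of_mem_openSegment {x y z : (Fin n → ℝ) × ℝ} (hy : y ∈ wedgeConePolytope n)
    (hz : z ∈ wedgeConePolytope n) (h : x ∈ openSegment ℝ y z) (hb : x.2 = 0 ∨ x.2 = 1) :
    y.2 = x.2 ∧ z.2 = x.2 :=
  (LinearMap.snd ℝ (Fin n → ℝ) ℝ).toAffineMap.eq_of_mem_openSegment_of_map_mem_extremePoints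
    (by rw [extremePoints_Icc zero_le_one]; exact hb) hy.2.1 hz.2.1 h

theorem fst_apply_eq_of_mem_openSegment {x y z : (Fin n → ℝ) × ℝ} (hy : y ∈ wedgeConePolytope n)
    (hz : z ∈ wedgeConePolytope n) (h : x ∈ openSegment ℝ y z) {i : Fin n}
    (ha : x.1 i = 0 ∨ x.1 i = 1) : y.1 i = x.1 i ∧ z.1 i = x.1 i :=
  ((LinearMap.proj (R := ℝ) i).comp (LinearMap.fst ℝ (Fin n → ℝ) ℝ)).toAffineMap
    |>.eq_of_mem_openSegment_of_map_mem_extremePoints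
    (by rw [extremePoints_Icc zero_le_one]; exact ha) (hy.1 i) (hz.1 i) h

theorem apex_mem_extremePoints {t : ℝ} (ht : t = 0 ∨ t = 1) :
    ((fun _ => 1, t) : (Fin n → ℝ) × ℝ) ∈ (wedgeConePolytope n).extremePoints ℝ := by
  refine mem_extremePoints.2 ⟨apex_mem (by rcases ht with rfl | rfl <;> norm_num), ?_⟩
  intro y hy z hz h
  obtain ⟨hyt, hzt⟩ := snd_eq_of_mem_openSegment hy hz h ht
  exact ⟨Prod.ext (fst_eq_one_of_snd_eq_zero_or_one hy (hyt ▸ ht)) hyt,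
    Prod.ext (fst_eq_one_of_snd_eq_zero_or_one hz (hzt ▸ ht)) hzt⟩

theorem mk_half_mem_extremePoints {a : Fin n → ℝ} (ha : ∀ i, a i = 0 ∨ a i = 1) {j : Fin n}
    (hj : a j = 0) : (a, 1/2) ∈ (wedgeConePolytope n).extremePoints ℝ := by
  refine mem_extremePoints.2
    ⟨mk_half_mem_iff.2 fun i => by rcases ha i with h | h <;> rw [h] <;> norm_num, ?_⟩
  intro y hy z hz h
  have hy1 : y.1 = a := funext fun i => (fst_apply_eq_of_mem_openSegment hy hz h (ha i)).1
  have hz1 : z.1 = a := funext fun i => (fst_apply_eq_of_mem_openSegment hy hz h (ha i)).2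
  exact ⟨Prod.ext hy1 (snd_eq_half_of_fst_eq_zero hy (hy1 ▸ hj)),
    Prod.ext hz1 (snd_eq_half_of_fst_eq_zero hz (hz1 ▸ hj))⟩

/-- The second endpoint is where the ray from the apex `(1, t)` through `x` meets `b = 1/2`. -/
theorem mem_openSegment_apex {x : (Fin n → ℝ) × ℝ} {s t : ℝ} (hs0 : 0 < s) (hs1 : s < 1)
    (hb : x.2 = (1 - s) * t + s / 2) :
    x ∈ openSegment ℝ (fun _ => 1, t) (fun i => (x.1 i - (1 - s)) / s, 1/2) := by
  refine ⟨1 - s, s, by linarith, hs0, by ring, Prod.ext (funext fun i => ?_) ?_⟩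
  · simp only [Prod.fst_add, Prod.smul_fst, Pi.add_apply, Pi.smul_apply, smul_eq_mul]
    field_simp
    ring
  · simp only [Prod.snd_add, Prod.smul_snd, smul_eq_mul, hb]
    ring

theorem notMem_extremePoints_of_snd_eq {x : (Fin n → ℝ) × ℝ} (hx : x ∈ wedgeConePolytope n)
    {s t : ℝ} (hs0 : 0 < s) (hs1 : s < 1) (ht : t ∈ Icc 0 1) (ht' : t ≠ 1/2)
    (hb : x.2 = (1 - s) * t + s / 2) (ha : ∀ i, 1 - s ≤ x.1 i) :
    x ∉ (wedgeConePolytope n).extremePoints ℝ := by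
  intro hext
  have hq : ((fun i => (x.1 i - (1 - s)) / s, 1/2) : (Fin n → ℝ) × ℝ) ∈ wedgeConePolytope n := by
    refine mk_half_mem_iff.2 fun i => ⟨div_nonneg (by linarith [ha i]) hs0.le, ?_⟩
    rw [div_le_one hs0]
    linarith [(hx.1 i).2]
  exact ht' (congrArg Prod.snd (eq_of_mem_extremePoints_of_mem_openSegment hext (apex_mem ht) hq
    (mem_openSegment_apex hs0 hs1 hb)))

theorem snd_eq_of_mem_extremePoints {x : (Fin n → ℝ) × ℝ}
    (hx : x ∈ (wedgeConePolytope n).extremePoints ℝ) : x.2 = 0 ∨ x.2 = 1/2 ∨ x.2 = 1 := by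
  have hxP := extremePoints_subset hx
  obtain ⟨-, ⟨hb0, hb1⟩, hab⟩ := id hxP
  by_contra! h
  obtain ⟨hne0, hne_half, hne1⟩ := h
  rcases lt_or_gt_of_ne hne_half with hlt | hgt
  · have hpos : 0 < x.2 := lt_of_le_of_ne hb0 (Ne.symm hne0)
    exact notMem_extremePoints_of_snd_eq hxP (s := 2 * x.2) (t := 0) (by linarith) (by linarith)
      (by norm_num) (by norm_num) (by ring) (fun i => by linarith [(hab i).1]) hx
  · have hlt1 : x.2 < 1 := lt_of_le_of_ne hb1 hne1
    exact notMem_extremePoints_of_snd_eq hxP (s := 2 - 2 * x.2) (t := 1) (by linarith)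
      (by linarith) (by norm_num) (by norm_num) (by ring) (fun i => by linarith [(hab i).2]) hx

theorem fst_eq_zero_or_one_of_mem_extremePoints {x : (Fin n → ℝ) × ℝ}
    (hx : x ∈ (wedgeConePolytope n).extremePoints ℝ) (hb : x.2 = 1/2) (i : Fin n) :
    x.1 i = 0 ∨ x.1 i = 1 := by
  by_contra! h
  have hxi := (extremePoints_subset hx).1
  have hpos : 0 < x.1 i := lt_of_le_of_ne (hxi i).1 h.1.symm
  have hmem : ∀ c ∈ Icc (0:ℝ) 1, (Function.update x.1 i c, 1/2) ∈ wedgeConePolytope n :=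
    fun c hc => mk_half_mem_iff.2 fun k => by
      rcases eq_or_ne k i with rfl | hk
      · simpa using hc
      · simpa [hk] using hxi k
  have hseg : x ∈ openSegment ℝ (Function.update x.1 i 0, 1/2) (Function.update x.1 i 1, 1/2) := by
    refine ⟨1 - x.1 i, x.1 i, by linarith [lt_of_le_of_ne (hxi i).2 h.2], hpos, by ring,
      Prod.ext (funext fun k => ?_) ?_⟩
    · rcases eq_or_ne k i with rfl | hk
      · simp
      · simp only [Prod.smul_mk, Prod.mk_add_mk, Pi.add_apply, Pi.smul_apply, smul_eq_mul,
          Function.update_of_ne hk]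
        ring
    · simp only [Prod.smul_mk, Prod.mk_add_mk, smul_eq_mul, hb]
      ring
  have := congrArg (fun y => y.1 i) (eq_of_mem_extremePoints_of_mem_openSegment hx
    (hmem 0 (by norm_num)) (hmem 1 (by norm_num)) hseg)
  simp at this

theorem exists_fst_eq_zero_of_mem_extremePoints {x : (Fin n → ℝ) × ℝ}
    (hx : x ∈ (wedgeConePolytope n).extremePoints ℝ) (hb : x.2 = 1/2) : ∃ j, x.1 j = 0 := by
  by_contra! h
  have hx1 : x = (fun _ => 1, 1/2) :=
    Prod.ext (funext fun i =>
      (fst_eq_zero_or_one_of_mem_extremePoints hx hb i).resolve_left (h i)) hb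
  have hseg : x ∈ openSegment ℝ (fun _ => 1, 0) (fun _ => 1, 1) := by
    refine ⟨1/2, 1/2, by norm_num, by norm_num, by norm_num, ?_⟩
    rw [hx1]
    ext <;> norm_num
  have := eq_of_mem_extremePoints_of_mem_openSegment hx (apex_mem (by norm_num))
    (apex_mem (by norm_num)) hseg
  simp at this

end wedgeConePolytope

open wedgeConePolytope in
theorem extremePoints_wedgeConePolytope (n : ℕ) :
    (wedgeConePolytope n).extremePoints ℝ = wedgeConeVertices n := by
  ext x
  constructor
  · intro hx
    have hxP := extremePoints_subset hx
    rcases snd_eq_of_mem_extremePoints hx with hb | hb | hb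
    · exact Or.inl (Or.inl (Prod.ext (fst_eq_one_of_snd_eq_zero_or_one hxP (Or.inl hb)) hb))
    · exact Or.inr ⟨fst_eq_zero_or_one_of_mem_extremePoints hx hb,
        exists_fst_eq_zero_of_mem_extremePoints hx hb, hb⟩
    · exact Or.inl (Or.inr (Prod.ext (fst_eq_one_of_snd_eq_zero_or_one hxP (Or.inr hb)) hb))
  · rintro ((rfl | rfl) | ⟨ha, ⟨j, hj⟩, hb⟩)
    · exact apex_mem_extremePoints (Or.inl rfl)
    · exact apex_mem_extremePoints (Or.inr rfl)
    · obtain ⟨a, b⟩ := x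
      obtain rfl : b = 1/2 := hb
      exact mk_half_mem_extremePoints ha hj

theorem Set.ncard_univ_pi_pair {ι α : Type*} [Fintype ι] {a b : α} (hab : a ≠ b) :
    (pi univ fun _ : ι => ({a, b} : Set α)).ncard = 2 ^ Fintype.card ι := by
  rw [ncard_def, encard_pi_eq_prod_encard, encard_pair hab]
  simp

theorem ncard_wedgeConeVertices (n : ℕ) : (wedgeConeVertices n).ncard = 2 ^ n + 1 := by
  have hhalf : {x : (Fin n → ℝ) × ℝ | (∀ i, x.1 i = 0 ∨ x.1 i = 1) ∧ (∃ j, x.1 j = 0) ∧ x.2 = 1/2}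
      = (fun a => (a, 1/2)) '' ((pi univ fun _ => {0, 1}) \ {fun _ => 1}) := by
    ext ⟨a, b⟩
    simp only [mem_ofPred_eq, mem_image, mem_sdiff, mem_pi, mem_univ, mem_insert_iff,
      mem_singleton_iff, forall_const, Prod.mk.injEq]
    constructor
    · rintro ⟨ha, ⟨j, hj⟩, rfl⟩
      exact ⟨a, ⟨ha, fun h => by simp [h] at hj⟩, rfl, rfl⟩
    · rintro ⟨a, ⟨ha, hne⟩, rfl, rfl⟩
      refine ⟨ha, ?_, rfl⟩
      by_contra! h
      exact hne (funext fun i => (ha i).resolve_left (h i))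
  have hdisj : Disjoint ({(fun _ => 1, 0), (fun _ => 1, 1)} : Set ((Fin n → ℝ) × ℝ))
      ((fun a => (a, 1/2)) '' ((pi univ fun _ => {0, 1}) \ {fun _ => 1})) := by
    simp only [disjoint_insert_left, disjoint_singleton_left, mem_image, Prod.mk.injEq, not_exists]
    norm_num
  have hfin : (pi univ fun _ : Fin n => ({0, 1} : Set ℝ)).Finite := Finite.pi fun _ => toFinite _
  have hone : (fun _ => 1) ∈ pi univ fun _ : Fin n => ({0, 1} : Set ℝ) := by simp
  rw [wedgeConeVertices, hhalf, ncard_union_eq hdisj (toFinite _)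
      (hfin.sdiff.image _), ncard_pair (by simp),
    ncard_image_of_injective _ fun a b h => congrArg Prod.fst h,
    ncard_sdiff_singleton_of_mem hone, ncard_univ_pi_pair zero_ne_one, Fintype.card_fin]
  have := Nat.one_le_two_pow (n := n)
  omega

theorem stmt11 (n : ℕ) :
    letI P : Set ((Fin n → ℝ) × ℝ) :=
      {x | (∀ i, x.1 i ∈ Set.Icc (0:ℝ) 1) ∧ x.2 ∈ Set.Icc (0:ℝ) 1 ∧
        ∀ i, (1 - x.1 i) / 2 ≤ x.2 ∧ x.2 ≤ (1 + x.1 i) / 2}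
    Set.extremePoints ℝ P =
      ({(fun _ => 1, 0), (fun _ => 1, 1)} ∪
        {x | (∀ i, x.1 i = 0 ∨ x.1 i = 1) ∧ (∃ j, x.1 j = 0) ∧ x.2 = 1/2}) ∧
    (Set.extremePoints ℝ P).ncard = 2 ^ n + 1 := by
  show (wedgeConePolytope n).extremePoints ℝ = wedgeConeVertices n ∧
    ((wedgeConePolytope n).extremePoints ℝ).ncard = 2 ^ n + 1
  rw [extremePoints_wedgeConePolytope]
  exact ⟨rfl, ncard_wedgeConeVertices n⟩
end

section
/- Let E be the N×N matrix over ℝ with E_{i,i} = 1, E_{i,i+1} = (-1)^{c_i+1} for 1 ≤ i ≤ N-1, E_{N,1} = (-1)^{c_N+1}, E_{N,N} = 1, and all other entries 0, where c₁,…,c_N ∈ ℤ₂. Then rank(E) = N if Σᵢ cᵢ ≡ 1 (mod 2), and rank(E) = N-1 if Σᵢ cᵢ ≡ 0 (mod 2). -/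
/-!
Write `a i = (-1) ^ (c i + 1)`, so that `E x = 0` says `x i = -a i * x (i + 1)` with indices
mod `N`. Going backwards around the cycle from `0` forces `x i = (∏_{k ≥ i} -a k) * x 0`, and
closing the cycle forces `x 0 = (∏_k -a k) * x 0 = (-1) ^ (∑ c) * x 0`. Hence the kernel is `0`
when `∑ c` is odd and the line spanned by the tail products when it is even; rank–nullity
gives the rank.
-/

open Finset

namespace Matrix

variable {K : Type*} [Field K] {n : ℕ}

-- `i + 1` wraps around in `Fin (n + 1)`; for `n = 0` both terms land on the single entry.
def cyclicBidiagonal (a : Fin (n + 1) → K) : Matrix (Fin (n + 1)) (Fin (n + 1)) K :=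
  1 + of fun i j => if j = i + 1 then a i else 0

theorem cyclicBidiagonal_mulVec (a : Fin (n + 1) → K) (x : Fin (n + 1) → K) (i : Fin (n + 1)) :
    (cyclicBidiagonal a *ᵥ x) i = x i + a i * x (i + 1) := by
  rw [cyclicBidiagonal, add_mulVec, one_mulVec]
  simp [mulVec, dotProduct]

theorem mem_ker_cyclicBidiagonal_iff {a : Fin (n + 1) → K} {x : Fin (n + 1) → K} :
    x ∈ LinearMap.ker (cyclicBidiagonal a).mulVecLin ↔ ∀ i, x i + a i * x (i + 1) = 0 := by
  simp [funext_iff, cyclicBidiagonal_mulVec]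

def cyclicTailProd (a : Fin (n + 1) → K) (i : Fin (n + 1)) : K :=
  ∏ k ∈ Ici i, -a k

theorem cyclicTailProd_zero (a : Fin (n + 1) → K) : cyclicTailProd a 0 = ∏ k, -a k := by
  rw [cyclicTailProd, ← bot_eq_zero, Ici_bot]

theorem cyclicTailProd_last (a : Fin (n + 1) → K) :
    cyclicTailProd a (Fin.last n) = -a (Fin.last n) := by
  rw [cyclicTailProd, ← Fin.top_eq_last, Ici_top, prod_singleton]

theorem cyclicTailProd_castSucc (a : Fin (n + 1) → K) (j : Fin n) :
    cyclicTailProd a j.castSucc = -a j.castSucc * cyclicTailProd a j.succ := by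
  have : Ioi j.castSucc = Ici j.succ := by
    ext k; simp [Fin.lt_def, Fin.le_def]
  rw [cyclicTailProd, cyclicTailProd, ← mul_prod_Ioi_eq_prod_Ici, this]

theorem eq_cyclicTailProd_mul_of_mem_ker {a : Fin (n + 1) → K} {x : Fin (n + 1) → K}
    (hx : x ∈ LinearMap.ker (cyclicBidiagonal a).mulVecLin) (i : Fin (n + 1)) :
    x i = cyclicTailProd a i * x 0 := by
  rw [mem_ker_cyclicBidiagonal_iff] at hx
  have step : ∀ i, x i = -a i * x (i + 1) := fun i => by linear_combination hx i
  induction i using Fin.reverseInduction with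
  | last => rw [step, Fin.last_add_one, cyclicTailProd_last]
  | cast j ih => rw [step, Fin.coeSucc_eq_succ, ih, cyclicTailProd_castSucc, mul_assoc]

theorem cyclicTailProd_mem_ker {a : Fin (n + 1) → K} (ha : ∏ k, -a k = 1) :
    cyclicTailProd a ∈ LinearMap.ker (cyclicBidiagonal a).mulVecLin := by
  rw [mem_ker_cyclicBidiagonal_iff]
  intro i
  induction i using Fin.lastCases with
  | last => rw [Fin.last_add_one, cyclicTailProd_last, cyclicTailProd_zero, ha]; ring
  | cast j => rw [Fin.coeSucc_eq_succ, cyclicTailProd_castSucc]; ring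

theorem ker_cyclicBidiagonal_eq_bot {a : Fin (n + 1) → K} (ha : ∏ k, -a k ≠ 1) :
    LinearMap.ker (cyclicBidiagonal a).mulVecLin = ⊥ := by
  refine (Submodule.eq_bot_iff _).2 fun x hx => ?_
  have hx0 : x 0 = 0 := by
    have h := eq_cyclicTailProd_mul_of_mem_ker hx 0
    rw [cyclicTailProd_zero] at h
    have : (1 - ∏ k, -a k) * x 0 = 0 := by linear_combination h
    exact (mul_eq_zero.1 this).resolve_left (sub_ne_zero.2 ha.symm)
  funext i
  rw [eq_cyclicTailProd_mul_of_mem_ker hx i, hx0, mul_zero, Pi.zero_apply]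

theorem ker_cyclicBidiagonal_eq_span {a : Fin (n + 1) → K} (ha : ∏ k, -a k = 1) :
    LinearMap.ker (cyclicBidiagonal a).mulVecLin = K ∙ cyclicTailProd a := by
  refine le_antisymm (fun x hx => Submodule.mem_span_singleton.2 ⟨x 0, ?_⟩) ?_
  · funext i
    rw [Pi.smul_apply, smul_eq_mul, mul_comm, eq_cyclicTailProd_mul_of_mem_ker hx i]
  · exact (Submodule.span_singleton_le_iff_mem _ _).2 (cyclicTailProd_mem_ker ha)

theorem rank_add_finrank_ker_mulVecLin {ι κ : Type*} [Fintype κ] (A : Matrix ι κ K) :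
    A.rank + Module.finrank K (LinearMap.ker A.mulVecLin) = Fintype.card κ := by
  rw [Matrix.rank, LinearMap.finrank_range_add_finrank_ker, Module.finrank_fintype_fun_eq_card]

theorem rank_cyclicBidiagonal_of_prod_ne_one {a : Fin (n + 1) → K} (ha : ∏ k, -a k ≠ 1) :
    (cyclicBidiagonal a).rank = n + 1 := by
  have := rank_add_finrank_ker_mulVecLin (cyclicBidiagonal a)
  rwa [ker_cyclicBidiagonal_eq_bot ha, finrank_bot, add_zero, Fintype.card_fin] at this

theorem rank_cyclicBidiagonal_of_prod_eq_one {a : Fin (n + 1) → K} (ha : ∏ k, -a k = 1) :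
    (cyclicBidiagonal a).rank = n := by
  have hv : cyclicTailProd a ≠ 0 := fun h => by
    simpa [cyclicTailProd_zero, ha] using congrFun h 0
  have := rank_add_finrank_ker_mulVecLin (cyclicBidiagonal a)
  rw [ker_cyclicBidiagonal_eq_span ha, finrank_span_singleton hv, Fintype.card_fin] at this
  omega

end Matrix

theorem stmt12 (N : ℕ) (hN : 2 ≤ N) (c : Fin N → ℕ)
    (E : Matrix (Fin N) (Fin N) ℝ)
    (hE : ∀ i j : Fin N,
      E i j = if (j : ℕ) = (i : ℕ) then 1
        else if (j : ℕ) = ((i : ℕ) + 1) % N then (-1:ℝ)^(c i + 1) else 0) :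
    ((∑ i, c i) % 2 = 1 → E.rank = N) ∧
    ((∑ i, c i) % 2 = 0 → E.rank = N - 1) := by
  obtain ⟨n, rfl⟩ : ∃ n, N = n + 2 := ⟨N - 2, by omega⟩
  set a : Fin (n + 2) → ℝ := fun i => (-1) ^ (c i + 1)
  have hEa : E = Matrix.cyclicBidiagonal a := by
    ext i j
    have hsucc : ((i : ℕ) + 1) % (n + 2) = ((i + 1 : Fin (n + 2)) : ℕ) := by simp [Fin.val_add]
    simp only [hE, hsucc, Fin.val_inj, Matrix.cyclicBidiagonal, Matrix.add_apply,
      Matrix.one_apply, Matrix.of_apply]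
    have hne : i + 1 ≠ i := by simp
    rcases eq_or_ne j i with rfl | hji
    · simp [hne.symm]
    · simp [hji, hji.symm, a]
  have hprod : ∏ k, -a k = (-1) ^ (∑ i, c i) := by
    simp [a, pow_succ, prod_pow_eq_pow_sum]
  subst hEa
  refine ⟨fun hodd => Matrix.rank_cyclicBidiagonal_of_prod_ne_one ?_,
    fun heven => Matrix.rank_cyclicBidiagonal_of_prod_eq_one ?_⟩
  · rw [hprod, neg_one_pow_eq_pow_mod_two, hodd]; norm_num
  · rw [hprod, neg_one_pow_eq_pow_mod_two, heven, pow_zero]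
end
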